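/- arXiv:1402.2724 — 2 statements merged into one kernel-verified Lean document; each statement's English description precedes it below -/
import Mathlib

section
/- Let q be a prime power, let a, c be fixed non-zero elements of F_q, let e be a divisor of q−1, and let p_1, …, p_s (s ≥ 1) be the distinct primes dividing q−1 but not e. Then N(q−1, q−1) ≥ ∑_{i=1}^s N(p_i·e, e) + ∑_{i=1}^s N(e, p_i·e) − (2s−1)·N(e, e). -/
/-- For a divisor `e` of `q - 1`, a non-zero element `g` of the finite field `F` is
`e`-free if whenever `g = h ^ d` with `h ∈ F` and `d ∣ e`, then `d = 1`. -/
def IsEFree {F : Type*} [Field F] (e : ℕ) (g : F) : Prop :=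
  g ≠ 0 ∧ ∀ d : ℕ, d ∣ e → (∃ h : F, h ^ d = g) → d = 1

/-- For fixed `a, c` in the finite field `F` and `e₁, e₂` dividing `q - 1`,
`Ncnt a c e₁ e₂` is the number of `g ∈ F` such that `g` is `e₁`-free and `a - c * g`
is `e₂`-free. -/
noncomputable def Ncnt {F : Type*} [Field F] [Fintype F] (a c : F) (e₁ e₂ : ℕ) : ℕ :=
  {g : F | IsEFree e₁ g ∧ IsEFree e₂ (a - c * g)}.ncard

/-- `θ(n) = ∏_{p ∣ n} (1 - 1/p)`, the product over the distinct primes dividing `n`. -/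
noncomputable def thetaFn (n : ℕ) : ℝ :=
  ∏ p ∈ n.primeFactors, (1 - 1 / (p : ℝ))

/-- `W(n) = 2^(ω n)`, the number of square-free divisors of `n`, where `ω n` is the
number of distinct prime factors of `n`. -/
def Wfn (n : ℕ) : ℕ := 2 ^ n.primeFactors.card

/-!
Freeness can be tested prime by prime, so an element `g` with `g` and `a - c g` both `e`-free
fails to be counted by `N(q-1, q-1)` only if `g` fails to be `pᵢ e`-free or `a - c g` fails to be
`pᵢ e`-free for some `i`. The union bound over these `2s` exceptional sets, each the complement
of a set counted by `N(pᵢ e, e)` or `N(e, pᵢ e)` inside the set counted by `N(e, e)`, gives the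
inequality.
-/

theorem sum_card_sub_mul_card_le_card {α ι : Type*} [DecidableEq α] {U T : Finset α}
    {I : Finset ι} {A : ι → Finset α} (hA : ∀ i ∈ I, A i ⊆ U)
    (hT : ∀ x ∈ U, (∀ i ∈ I, x ∈ A i) → x ∈ T) :
    ∑ i ∈ I, ((A i).card : ℤ) - (I.card - 1) * U.card ≤ T.card := by
  have hcover : U \ T ⊆ I.biUnion fun i => U \ A i := by
    intro x hx
    obtain ⟨hxU, hxT⟩ := Finset.mem_sdiff.mp hx
    by_contra hx'
    simp only [Finset.mem_biUnion, Finset.mem_sdiff, not_exists, not_and, not_not] at hx'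
    exact hxT (hT x hxU fun i hi => hx' i hi hxU)
  have hunion : (U \ T).card ≤ ∑ i ∈ I, (U \ A i).card :=
    (Finset.card_le_card hcover).trans Finset.card_biUnion_le
  have hsdiff : ∀ i ∈ I, ((U \ A i).card : ℤ) = U.card - (A i).card := fun i hi => by
    rw [Finset.card_sdiff_of_subset (hA i hi), Nat.cast_sub (Finset.card_le_card (hA i hi))]
  have hT_ge : (U.card : ℤ) - T.card ≤ (U \ T).card := by
    have := Finset.le_card_sdiff T U
    omega
  have hunion' : ((U \ T).card : ℤ) ≤ ∑ i ∈ I, ((U.card : ℤ) - (A i).card) := by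
    rw [← Finset.sum_congr rfl hsdiff]; exact_mod_cast hunion
  rw [Finset.sum_sub_distrib, Finset.sum_const, nsmul_eq_mul] at hunion'
  linarith

section

variable {F : Type*} [Field F]

theorem IsEFree.of_dvd {m n : ℕ} (hmn : m ∣ n) {x : F} (h : IsEFree n x) : IsEFree m x :=
  ⟨h.1, fun d hd => h.2 d (hd.trans hmn)⟩

theorem isEFree_iff_forall_prime {n : ℕ} (hn : n ≠ 0) (g : F) :
    IsEFree n g ↔ g ≠ 0 ∧ ∀ p ∈ n.primeFactors, ¬∃ h : F, h ^ p = g := by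
  refine ⟨fun ⟨hg, hfree⟩ => ⟨hg, fun p hp hpow => ?_⟩, fun ⟨hg, hfree⟩ => ⟨hg, fun d hd hpow => ?_⟩⟩
  · exact (Nat.prime_of_mem_primeFactors hp).ne_one (hfree p (Nat.dvd_of_mem_primeFactors hp) hpow)
  · by_contra hd1
    have hmin : d.minFac ∣ d := Nat.minFac_dvd d
    obtain ⟨h, rfl⟩ := hpow
    refine hfree d.minFac ?_ ⟨h ^ (d / d.minFac), by rw [← pow_mul, Nat.div_mul_cancel hmin]⟩
    exact Nat.mem_primeFactors.mpr ⟨Nat.minFac_prime hd1, hmin.trans hd, hn⟩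

/-- Freeness is tested prime by prime: `e`-freeness covers the primes of `e`, and `p * e`-freeness
each remaining prime `p` of `n`. -/
theorem IsEFree.of_forall_mul_prime {n e : ℕ} (hn : n ≠ 0) {x : F} (hx : IsEFree e x)
    (hxp : ∀ p ∈ n.primeFactors \ e.primeFactors, IsEFree (p * e) x) : IsEFree n x := by
  refine (isEFree_iff_forall_prime hn x).mpr ⟨hx.1, fun p hp hpow => ?_⟩
  have hprime := Nat.prime_of_mem_primeFactors hp
  by_cases hpe : p ∈ e.primeFactors
  · exact hprime.ne_one (hx.2 p (Nat.dvd_of_mem_primeFactors hpe) hpow)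
  · exact hprime.ne_one ((hxp p (Finset.mem_sdiff.mpr ⟨hp, hpe⟩)).2 p (dvd_mul_right p e) hpow)

section

variable [Fintype F]

open Classical in
noncomputable def freePairSet (a c : F) (e₁ e₂ : ℕ) : Finset F :=
  {g | IsEFree e₁ g ∧ IsEFree e₂ (a - c * g)}

theorem mem_freePairSet {a c : F} {e₁ e₂ : ℕ} {g : F} :
    g ∈ freePairSet a c e₁ e₂ ↔ IsEFree e₁ g ∧ IsEFree e₂ (a - c * g) := by
  simp [freePairSet]

theorem Ncnt_eq_card_freePairSet (a c : F) (e₁ e₂ : ℕ) :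
    Ncnt a c e₁ e₂ = (freePairSet a c e₁ e₂).card := by
  rw [Ncnt, ← Set.ncard_coe_finset]
  congr 1
  ext g
  simp [mem_freePairSet]

theorem freePairSet_subset_freePairSet {a c : F} {e₁ e₂ e₁' e₂' : ℕ} (h₁ : e₁ ∣ e₁')
    (h₂ : e₂ ∣ e₂') : freePairSet a c e₁' e₂' ⊆ freePairSet a c e₁ e₂ := fun _ hg =>
  mem_freePairSet.mpr ⟨(mem_freePairSet.mp hg).1.of_dvd h₁, (mem_freePairSet.mp hg).2.of_dvd h₂⟩

end

end

theorem sieve_inequality_general (q : ℕ) (hq : IsPrimePow q)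
    (F : Type*) [Field F] [Fintype F]
    (a c : F)
    (e : ℕ)
    (P : Finset ℕ) (hP : P = (q - 1).primeFactors \ e.primeFactors) :
    (Ncnt a c (q - 1) (q - 1) : ℤ) ≥
      ∑ p ∈ P, (Ncnt a c (p * e) e : ℤ) + ∑ p ∈ P, (Ncnt a c e (p * e) : ℤ)
        - (2 * P.card - 1) * (Ncnt a c e e : ℤ) := by
  classical
  have hq1 : q - 1 ≠ 0 := by have := hq.two_le; omega
  have hsieve := sum_card_sub_mul_card_le_card (U := freePairSet a c e e)
    (T := freePairSet a c (q - 1) (q - 1)) (I := P.disjSum P)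
    (A := Sum.elim (fun p => freePairSet a c (p * e) e) (fun p => freePairSet a c e (p * e)))
    (by
      rintro (p | p) -
      exacts [freePairSet_subset_freePairSet (dvd_mul_left e p) dvd_rfl,
        freePairSet_subset_freePairSet dvd_rfl (dvd_mul_left e p)])
    (by
      intro g hg hA
      rw [mem_freePairSet] at hg ⊢
      subst hP
      exact ⟨hg.1.of_forall_mul_prime hq1 fun p hp =>
          (mem_freePairSet.mp (hA (.inl p) (Finset.inl_mem_disjSum.mpr hp))).1,
        hg.2.of_forall_mul_prime hq1 fun p hp =>
          (mem_freePairSet.mp (hA (.inr p) (Finset.inr_mem_disjSum.mpr hp))).2⟩)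
  rw [Finset.sum_disjSum, Finset.card_disjSum] at hsieve
  simp only [Sum.elim_inl, Sum.elim_inr] at hsieve
  simp only [Ncnt_eq_card_freePairSet]
  push_cast at hsieve
  linarith

/-- Lemma 1, inequality (5): if `p₁, …, p_s` (`s ≥ 1`) are the distinct primes dividing
`q - 1` but not `e`, then
`N(q-1, q-1) ≥ ∑ᵢ N(pᵢ·e, e) + ∑ᵢ N(e, pᵢ·e) - (2s - 1)·N(e, e)`. -/
theorem sieve_inequality (q : ℕ) (hq : IsPrimePow q)
    (F : Type*) [Field F] [Fintype F] (hcard : Fintype.card F = q)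
    (a c : F) (ha : a ≠ 0) (hc : c ≠ 0)
    (e : ℕ) (he : e ∣ q - 1)
    (P : Finset ℕ) (hP : P = (q - 1).primeFactors \ e.primeFactors)
    (hs : P.Nonempty) :
    (Ncnt a c (q - 1) (q - 1) : ℤ) ≥
      ∑ p ∈ P, (Ncnt a c (p * e) e : ℤ) + ∑ p ∈ P, (Ncnt a c e (p * e) : ℤ)
        - (2 * P.card - 1) * (Ncnt a c e e : ℤ) :=
  sieve_inequality_general q hq F a c e P hP
end

section
/- Let q be a prime power, let a, c be fixed non-zero elements of F_q, and let e_1, e_2 be divisors of q−1. Then N(e_1, e_2) = θ(e_1)·θ(e_2) · ∑_{d_1 | e_1} (μ(d_1)/φ(d_1)) ∑_{d_2 | e_2} (μ(d_2)/φ(d_2)) ∑_{χ_{d_1}} ∑_{χ_{d_2}} χ_{d_1}(1/c)·(χ_{d_1}·χ_{d_2})(a)·J(χ_{d_1}, χ_{d_2}), where the inner sums run over all multiplicative characters χ_{d_1} of F_q of exact order d_1 and all multiplicative characters χ_{d_2} of exact order d_2. -/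
/-! Vinogradov's formula expresses the indicator of `e`-free elements through characters: for
`g ≠ 0`, `θ(e) ∑_{d ∣ e} μ(d)/φ(d) S_d(g)` is `1` if `g` is `e`-free and `0` otherwise, where
`S_d(g) = ∑_{ord χ = d} χ(g)`. Indeed `d ↦ S_d(g)` is multiplicative (an element of order `m n`
with `m, n` coprime is uniquely a product of elements of orders `m` and `n`), so the sum over
`d ∣ e` factors as `∏_{p ∣ e} (1 - S_p(g)/(p - 1))`, and `S_p(g)` is `p - 1` or `-1` according as
`g` is a `p`-th power or not. Multiplying the indicators for `g` and `a - c g`, summing over `g`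
and substituting `g = a c⁻¹ t` turns each `∑_g χ₁(g) χ₂(a - c g)` into
`χ₁(c⁻¹) (χ₁ χ₂)(a) J(χ₁, χ₂)`. -/

open Finset ArithmeticFunction

section OrderOf

variable {G : Type*} [CommGroup G]

theorem eq_and_eq_of_mul_eq_mul_of_coprime {m n : ℕ} (hmn : m.Coprime n) {x x' y y' : G}
    (hx : x ^ m = 1) (hx' : x' ^ m = 1) (hy : y ^ n = 1) (hy' : y' ^ n = 1)
    (h : x * y = x' * y') : x = x' ∧ y = y' := by
  have hw : x / x' = y' / y := by rw [div_eq_div_iff_mul_eq_mul, h, mul_comm]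
  have hxx' : (x / x') ^ Nat.gcd m n = 1 := pow_gcd_eq_one.mpr
    ⟨by rw [div_pow, hx, hx', div_one], by rw [hw, div_pow, hy, hy', div_one]⟩
  rw [hmn.gcd_eq_one, pow_one, div_eq_one] at hxx'
  exact ⟨hxx', mul_left_cancel (hxx' ▸ h)⟩

variable [Fintype G]

theorem exists_mul_eq_of_orderOf_eq_mul {m n : ℕ} (hmn : m.Coprime n) {z : G}
    (hz : orderOf z = m * n) : ∃ x y : G, orderOf x = m ∧ orderOf y = n ∧ x * y = z := by
  obtain ⟨u, v, huv⟩ := Nat.isCoprime_iff_coprime.mpr hmn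
  have hpow : ∀ k : ℤ, z ^ (k * (m * n : ℕ)) = 1 := fun k => by
    rw [mul_comm, zpow_mul, zpow_natCast, ← hz, pow_orderOf_eq_one, one_zpow]
  set x := z ^ (v * n)
  set y := z ^ (u * m)
  have hxm : orderOf x ∣ m := orderOf_dvd_of_pow_eq_one <| by
    rw [← zpow_natCast, ← zpow_mul, ← hpow v]; push_cast; ring_nf
  have hyn : orderOf y ∣ n := orderOf_dvd_of_pow_eq_one <| by
    rw [← zpow_natCast, ← zpow_mul, ← hpow u]; push_cast; ring_nf
  have hxy : x * y = z := by rw [← zpow_add, add_comm, huv, zpow_one]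
  have hprod : orderOf x * orderOf y = m * n := by
    rw [← hz, ← hxy, (Commute.all x y).orderOf_mul_eq_mul_orderOf_of_coprime
      ((hmn.coprime_dvd_left hxm).coprime_dvd_right hyn)]
  have hmn0 : 0 < m * n := hz ▸ orderOf_pos z
  have hm := Nat.pos_of_mul_pos_right hmn0
  have hn := Nat.pos_of_mul_pos_left hmn0
  have hx := Nat.le_of_dvd hm hxm
  have hy := Nat.le_of_dvd hn hyn
  refine ⟨x, y, ?_, ?_, hxy⟩ <;> nlinarith

theorem sum_orderOf_eq_mul_of_coprime {M : Type*} [AddCommMonoid M] (f : G → M) {m n : ℕ}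
    (hmn : m.Coprime n) :
    ∑ z with orderOf z = m * n, f z =
      ∑ x with orderOf x = m, ∑ y with orderOf y = n, f (x * y) := by
  rw [← sum_product']
  symm
  refine sum_nbij (fun p => p.1 * p.2) ?_ ?_ ?_ fun _ _ => rfl
  · rintro ⟨x, y⟩ hxy
    simp only [mem_product, mem_filter_univ] at hxy ⊢
    rw [(Commute.all x y).orderOf_mul_eq_mul_orderOf_of_coprime (hxy.1 ▸ hxy.2 ▸ hmn), hxy.1,
      hxy.2]
  · rintro ⟨x, y⟩ hxy ⟨x', y'⟩ hxy' h
    simp only [coe_product, coe_filter, Set.mem_prod, Set.mem_ofPred_eq, mem_univ, true_and]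
      at hxy hxy'
    obtain ⟨rfl, rfl⟩ := eq_and_eq_of_mul_eq_mul_of_coprime hmn
      (hxy.1 ▸ pow_orderOf_eq_one x) (hxy'.1 ▸ pow_orderOf_eq_one x')
      (hxy.2 ▸ pow_orderOf_eq_one y) (hxy'.2 ▸ pow_orderOf_eq_one y') h
    rfl
  · intro z hz
    simp only [coe_filter, mem_univ, true_and, Set.mem_ofPred_eq] at hz
    obtain ⟨x, y, hx, hy, rfl⟩ := exists_mul_eq_of_orderOf_eq_mul hmn hz
    exact ⟨(x, y), by simp [hx, hy], rfl⟩

end OrderOf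

section Arithmetic

theorem ArithmeticFunction.IsMultiplicative.sum_divisors_moebius_mul_eq_prod_one_sub
    {R : Type*} [CommRing R] {f : ArithmeticFunction R} (hf : f.IsMultiplicative) {n : ℕ}
    (hn : n ≠ 0) :
    ∑ d ∈ n.divisors, (moebius d : R) * f d = ∏ p ∈ n.primeFactors, (1 - f p) := by
  rw [← Nat.primeFactors_radical, hf.prodPrimeFactors_one_sub_of_squarefree _
    UniqueFactorizationMonoid.squarefree_radical]
  refine (sum_subset (Nat.divisors_subset_of_dvd hn UniqueFactorizationMonoid.radical_dvd_self)
    fun d hdn hd => ?_).symm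
  have hsq : ¬Squarefree d := fun hsq => hd <| Nat.mem_divisors.mpr
    ⟨(UniqueFactorizationMonoid.dvd_radical_iff hsq.isRadical hn).mpr
      (Nat.dvd_of_mem_divisors hdn), UniqueFactorizationMonoid.radical_ne_zero⟩
  rw [moebius_eq_zero_of_not_squarefree hsq, Int.cast_zero, zero_mul]

variable {G R : Type*} [CommGroup G] [Fintype G] [CommSemiring R]

noncomputable def sumOfOrder (ψ : G →* R) : ArithmeticFunction R :=
  ⟨fun d => ∑ x with orderOf x = d, ψ x, by simp [(orderOf_pos _).ne']⟩

theorem sumOfOrder_apply (ψ : G →* R) (d : ℕ) :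
    sumOfOrder ψ d = ∑ x with orderOf x = d, ψ x :=
  rfl

theorem isMultiplicative_sumOfOrder (ψ : G →* R) : (sumOfOrder ψ).IsMultiplicative := by
  refine ⟨?_, fun {m n} hmn => ?_⟩
  · rw [sumOfOrder_apply, sum_eq_single_of_mem 1 (by simp)
      fun x hx hx1 => absurd (orderOf_eq_one_iff.mp (mem_filter.mp hx).2) hx1, map_one]
  · simp only [sumOfOrder_apply]
    rw [sum_orderOf_eq_mul_of_coprime _ hmn, sum_mul_sum]
    simp only [map_mul]

def invTotient (K : Type*) [DivisionSemiring K] : ArithmeticFunction K :=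
  ⟨fun d => (d.totient : K)⁻¹, by simp⟩

@[simp]
theorem invTotient_apply (K : Type*) [DivisionSemiring K] (d : ℕ) :
    invTotient K d = (d.totient : K)⁻¹ :=
  rfl

theorem isMultiplicative_invTotient (K : Type*) [Semifield K] :
    (invTotient K).IsMultiplicative :=
  ⟨by simp, fun {m n} hmn => by simp [Nat.totient_mul hmn, mul_comm]⟩

end Arithmetic

namespace MulChar

section Monoid

variable {M R : Type*} [CommMonoid M] [CommRing R]

def evalHom (a : Mˣ) : MulChar M R →* R where
  toFun χ := χ a
  map_one' := one_apply_coe a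
  map_mul' χ χ' := mul_apply χ χ' a

@[simp]
theorem evalHom_apply (a : Mˣ) (χ : MulChar M R) : evalHom a χ = χ a := rfl

variable [Finite M] [HasEnoughRootsOfUnity R (Monoid.exponent Mˣ)]

/-- The characters trivial on the `n`-th powers are those with `χ ^ n = 1`, and by duality they
separate the `n`-th powers from the other units. -/
theorem exists_pow_eq_one_apply_ne_one {n : ℕ} {u : Mˣ}
    (hu : u ∉ (powMonoidHom n : Mˣ →* Mˣ).range) : ∃ χ : MulChar M R, χ ^ n = 1 ∧ χ u ≠ 1 := by
  set H := (powMonoidHom n : Mˣ →* Mˣ).range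
  set X := (subgroupOrderIsoSubgroupMulChar M R H).ofDual
  have hX : ∀ χ ∈ X, χ ^ n = 1 := fun χ hχ => ext fun v => by
    rw [mem_subgroupOrderIsoSubgroupMulChar_iff] at hχ
    rw [pow_apply_coe, one_apply_coe, ← map_pow, ← Units.val_pow_eq_pow_val]
    exact hχ _ ⟨v, rfl⟩
  have hXH : (subgroupOrderIsoSubgroupMulChar M R).symm (OrderDual.toDual X) = H :=
    OrderIso.symm_apply_apply _ H
  rw [← hXH, mem_subgroupOrderIsoSubgroupMulChar_symm_iff] at hu
  push Not at hu
  obtain ⟨χ, hχX, hχu⟩ := hu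
  exact ⟨χ, hX χ hχX, hχu⟩

theorem sum_pow_eq_one_apply_eq_zero [IsDomain R] [Fintype (MulChar M R)]
    [DecidableEq (MulChar M R)] {n : ℕ} {u : Mˣ}
    (hu : u ∉ (powMonoidHom n : Mˣ →* Mˣ).range) :
    ∑ χ : MulChar M R with χ ^ n = 1, χ u = 0 := by
  obtain ⟨χ₀, hχ₀n, hχ₀u⟩ := exists_pow_eq_one_apply_ne_one (R := R) hu
  set S := ∑ χ : MulChar M R with χ ^ n = 1, χ u
  have hshift : χ₀ u * S = S := by
    simp only [S, mul_sum, sum_filter]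
    refine Fintype.sum_equiv (Equiv.mulLeft χ₀) _ _ fun χ => ?_
    simp [mul_pow, hχ₀n, mul_apply]
  have hS : (χ₀ u - 1) * S = 0 := by rw [sub_mul, hshift, one_mul, sub_self]
  exact (mul_eq_zero.mp hS).resolve_left (sub_ne_zero.mpr hχ₀u)

end Monoid

section Field

variable {F R : Type*} [Field F] [Fintype F] [CommRing R]
  [HasEnoughRootsOfUnity R (Monoid.exponent Fˣ)]

instance isCyclic : IsCyclic (MulChar F R) :=
  let e := (mulEquiv_units F R).some
  isCyclic_of_surjective e.symm.toMonoidHom e.symm.surjective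

variable [Fintype (MulChar F R)]

theorem card_eq_card_sub_one : Fintype.card (MulChar F R) = Fintype.card F - 1 := by
  rw [Fintype.card_eq_nat_card, card_eq_card_units_of_hasEnoughRootsOfUnity, Nat.card_units,
    Nat.card_eq_fintype_card]

theorem sumOfOrder_evalHom_pow {d : ℕ} (hd : d ∣ Fintype.card F - 1) (v : Fˣ) :
    sumOfOrder (evalHom (R := R) (v ^ d)) d = d.totient := by
  have h1 : ∀ χ ∈ ({χ | orderOf χ = d} : Finset (MulChar F R)), evalHom (v ^ d) χ = 1 :=
    fun χ hχ => by
      rw [evalHom_apply, Units.val_pow_eq_pow_val, map_pow, ← pow_apply_coe,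
        ← (mem_filter.mp hχ).2, pow_orderOf_eq_one, one_apply_coe]
  rw [sumOfOrder_apply, sum_congr rfl h1, sum_const, nsmul_one,
    IsCyclic.card_orderOf_eq_totient (card_eq_card_sub_one (F := F) (R := R) ▸ hd)]

theorem sumOfOrder_evalHom_prime_of_notMem [IsDomain R] {p : ℕ} (hp : p.Prime) {u : Fˣ}
    (hu : u ∉ (powMonoidHom p : Fˣ →* Fˣ).range) : sumOfOrder (evalHom (R := R) u) p = -1 := by
  classical
  have := Fact.mk hp
  have hfilter :
      ({χ | orderOf χ = p} : Finset (MulChar F R)) = ({χ | χ ^ p = 1} : Finset _).erase 1 := by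
    ext χ
    simp [orderOf_eq_prime_iff, and_comm]
  rw [sumOfOrder_apply, hfilter, sum_erase_eq_sub (by simp)]
  simp only [evalHom_apply]
  rw [sum_pow_eq_one_apply_eq_zero hu, one_apply_coe, zero_sub]

end Field

end MulChar

open MulChar

theorem isEFree_coe_unit_iff {F : Type*} [Field F] {e : ℕ} (he : e ≠ 0) (u : Fˣ) :
    IsEFree e (u : F) ↔ ∀ p ∈ e.primeFactors, u ∉ (powMonoidHom p : Fˣ →* Fˣ).range := by
  have hpow : ∀ {d : ℕ}, d ≠ 0 → (∃ h : F, h ^ d = u) →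
      u ∈ (powMonoidHom d : Fˣ →* Fˣ).range :=
    fun hd ⟨h, hh⟩ => ⟨Units.mk0 h fun h0 => u.ne_zero (by rw [← hh, h0, zero_pow hd]),
      Units.ext (by simpa using hh)⟩
  refine ⟨fun ⟨_, hfree⟩ p hp ⟨v, hv⟩ => ?_, fun hfree => ⟨u.ne_zero, fun d hde hd => ?_⟩⟩
  · exact (Nat.prime_of_mem_primeFactors hp).one_lt.ne'
      (hfree p (Nat.dvd_of_mem_primeFactors hp) ⟨v, by rw [← hv]; simp⟩)
  · by_contra hd1
    obtain ⟨h, hh⟩ := hd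
    have hp := Nat.minFac_prime hd1
    refine hfree d.minFac (Nat.mem_primeFactors.mpr ⟨hp, d.minFac_dvd.trans hde, he⟩)
      (hpow hp.ne_zero ⟨h ^ (d / d.minFac), ?_⟩)
    rw [← pow_mul, Nat.div_mul_cancel d.minFac_dvd, hh]

section Vinogradov

variable {F : Type*} [Field F] [Fintype F] [Fintype (MulChar F ℂ)]

open scoped Classical in
theorem one_sub_inv_mul_one_sub_sumOfOrder_div_totient {p : ℕ} (hp : p.Prime)
    (hpq : p ∣ Fintype.card F - 1) (u : Fˣ) :
    (1 - (p : ℂ)⁻¹) * (1 - sumOfOrder (evalHom (R := ℂ) u) p / p.totient) =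
      if u ∉ (powMonoidHom p : Fˣ →* Fˣ).range then 1 else 0 := by
  have hp0 : (p : ℂ) ≠ 0 := Nat.cast_ne_zero.mpr hp.ne_zero
  have hp1 : (p : ℂ) - 1 ≠ 0 := sub_ne_zero.mpr (by exact_mod_cast hp.one_lt.ne')
  have hφ : (p.totient : ℂ) = p - 1 := by
    rw [Nat.totient_prime hp, Nat.cast_sub hp.one_le, Nat.cast_one]
  split_ifs with hu
  · obtain ⟨v, rfl⟩ := hu
    rw [powMonoidHom_apply, sumOfOrder_evalHom_pow hpq, div_self (hφ ▸ hp1), sub_self, mul_zero]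
  · rw [sumOfOrder_evalHom_prime_of_notMem hp hu, hφ]
    field_simp
    ring

open scoped Classical in
theorem theta_mul_sum_sumOfOrder_evalHom {e : ℕ} (he : e ∣ Fintype.card F - 1) (u : Fˣ) :
    (thetaFn e : ℂ) * ∑ d ∈ e.divisors,
        (moebius d : ℂ) / d.totient * sumOfOrder (evalHom (R := ℂ) u) d =
      if IsEFree e (u : F) then 1 else 0 := by
  have he0 : e ≠ 0 := by
    rintro rfl
    have := Fintype.one_lt_card (α := F)
    omega
  have hmult := (isMultiplicative_sumOfOrder (evalHom (R := ℂ) u)).pmul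
    (isMultiplicative_invTotient ℂ)
  have hsum : ∑ d ∈ e.divisors, (moebius d : ℂ) / d.totient * sumOfOrder (evalHom u) d =
      ∏ p ∈ e.primeFactors, (1 - sumOfOrder (evalHom (R := ℂ) u) p / p.totient) := by
    convert hmult.sum_divisors_moebius_mul_eq_prod_one_sub he0 using 2 <;>
      simp only [pmul_apply, invTotient_apply] <;> ring
  have htheta : (thetaFn e : ℂ) = ∏ p ∈ e.primeFactors, (1 - (p : ℂ)⁻¹) := by
    simp [thetaFn]
  rw [hsum, htheta, ← prod_mul_distrib, prod_congr rfl fun p hp =>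
    one_sub_inv_mul_one_sub_sumOfOrder_div_totient (Nat.prime_of_mem_primeFactors hp)
      ((Nat.dvd_of_mem_primeFactors hp).trans he) u, prod_ite_zero, prod_const_one]
  exact if_congr (isEFree_coe_unit_iff he0 u).symm rfl rfl

open scoped Classical in
theorem theta_mul_sum_charSum_eq_ite {e : ℕ} (he : e ∣ Fintype.card F - 1) (g : F) :
    (thetaFn e : ℂ) * ∑ d ∈ e.divisors,
        (moebius d : ℂ) / d.totient * ∑ χ : MulChar F ℂ with orderOf χ = d, χ g =
      if IsEFree e g then 1 else 0 := by
  obtain rfl | hg := eq_or_ne g 0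
  · have hfree : ¬IsEFree e (0 : F) := fun h => h.1 rfl
    simp [hfree]
  · exact theta_mul_sum_sumOfOrder_evalHom he (Units.mk0 g hg)

end Vinogradov

theorem sum_mulChar_mul_mulChar_sub_eq_jacobiSum {F R : Type*} [Field F] [Fintype F]
    [CommRing R] (χ₁ χ₂ : MulChar F R) {a c : F} (ha : a ≠ 0) (hc : c ≠ 0) :
    ∑ g : F, χ₁ g * χ₂ (a - c * g) = χ₁ c⁻¹ * (χ₁ * χ₂) a * jacobiSum χ₁ χ₂ := by
  rw [jacobiSum, mul_sum,
    ← Equiv.sum_comp (Equiv.mulLeft₀ (a * c⁻¹) (mul_ne_zero ha (inv_ne_zero hc)))]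
  refine sum_congr rfl fun t _ => ?_
  have h : a - c * (a * c⁻¹ * t) = a * (1 - t) := by field_simp
  simp only [Equiv.mulLeft₀_apply, h, map_mul, MulChar.mul_apply]
  ring

theorem Finset.sum_sum_mul_sum {γ ι κ R : Type*} [CommSemiring R] (S : Finset γ)
    (s : Finset ι) (t : Finset κ) (u : ι → γ → R) (v : κ → γ → R) :
    ∑ g ∈ S, (∑ i ∈ s, u i g) * (∑ k ∈ t, v k g) =
      ∑ i ∈ s, ∑ k ∈ t, ∑ g ∈ S, u i g * v k g := by
  simp_rw [sum_mul_sum]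
  rw [sum_comm]
  exact sum_congr rfl fun i _ => sum_comm

theorem ncard_setOf_and_eq_sum {α R : Type*} [Fintype α] [CommSemiring R] (P Q : α → Prop)
    [DecidablePred P] [DecidablePred Q] :
    ({x | P x ∧ Q x}.ncard : R) = ∑ x, (if P x then 1 else 0) * (if Q x then 1 else 0) := by
  classical
  rw [Set.ncard_eq_toFinset_card', Set.toFinset_ofPred, natCast_card_filter]
  simp_rw [ite_zero_mul_ite_zero, mul_one]

open scoped Classical in
theorem N_eq_jacobi_sum_general (q : ℕ)
    (F : Type*) [Field F] [Fintype F] (hcard : Fintype.card F = q)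
    (a c : F) (ha : a ≠ 0) (hc : c ≠ 0)
    (e₁ e₂ : ℕ) (he₁ : e₁ ∣ q - 1) (he₂ : e₂ ∣ q - 1) :
    (Ncnt a c e₁ e₂ : ℂ) =
      ((thetaFn e₁ * thetaFn e₂ : ℝ) : ℂ) *
        ∑ d₁ ∈ e₁.divisors, ((ArithmeticFunction.moebius d₁ : ℂ) / (Nat.totient d₁ : ℂ)) *
          ∑ d₂ ∈ e₂.divisors, ((ArithmeticFunction.moebius d₂ : ℂ) / (Nat.totient d₂ : ℂ)) *
            ∑ᶠ χ₁ : MulChar F ℂ, (if orderOf χ₁ = d₁ then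
              ∑ᶠ χ₂ : MulChar F ℂ, (if orderOf χ₂ = d₂ then
                χ₁ c⁻¹ * (χ₁ * χ₂) a * jacobiSum χ₁ χ₂ else 0) else 0) := by
  let : Fintype (MulChar F ℂ) := Fintype.ofFinite _
  subst hcard
  simp only [finsum_eq_sum_of_fintype, ← sum_filter, Complex.ofReal_mul]
  simp_rw [Ncnt, ncard_setOf_and_eq_sum, ← theta_mul_sum_charSum_eq_ite he₁,
    ← theta_mul_sum_charSum_eq_ite he₂, mul_mul_mul_comm _ _ (thetaFn e₂ : ℂ), ← mul_sum,
    sum_sum_mul_sum, mul_mul_mul_comm, ← mul_sum, sum_sum_mul_sum,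
    sum_mulChar_mul_mulChar_sub_eq_jacobiSum _ _ ha hc, mul_sum, mul_assoc]

open scoped Classical in
/-- Identity (4): for fixed non-zero `a, c ∈ F_q` and divisors `e₁, e₂` of `q - 1`,
`N(e₁, e₂) = θ(e₁)·θ(e₂) · ∑_{d₁ ∣ e₁} (μ(d₁)/φ(d₁)) ∑_{d₂ ∣ e₂} (μ(d₂)/φ(d₂))
  ∑_{χ_{d₁}} ∑_{χ_{d₂}} χ_{d₁}(1/c)·(χ_{d₁}·χ_{d₂})(a)·J(χ_{d₁}, χ_{d₂})`,
where the inner sums run over all multiplicative characters of `F_q` of exact order `d₁`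
(resp. `d₂`), and `J` is the Jacobi sum. -/
theorem N_eq_jacobi_sum (q : ℕ) (hq : IsPrimePow q)
    (F : Type*) [Field F] [Fintype F] (hcard : Fintype.card F = q)
    (a c : F) (ha : a ≠ 0) (hc : c ≠ 0)
    (e₁ e₂ : ℕ) (he₁ : e₁ ∣ q - 1) (he₂ : e₂ ∣ q - 1) :
    (Ncnt a c e₁ e₂ : ℂ) =
      ((thetaFn e₁ * thetaFn e₂ : ℝ) : ℂ) *
        ∑ d₁ ∈ e₁.divisors, ((ArithmeticFunction.moebius d₁ : ℂ) / (Nat.totient d₁ : ℂ)) *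
          ∑ d₂ ∈ e₂.divisors, ((ArithmeticFunction.moebius d₂ : ℂ) / (Nat.totient d₂ : ℂ)) *
            ∑ᶠ χ₁ : MulChar F ℂ, (if orderOf χ₁ = d₁ then
              ∑ᶠ χ₂ : MulChar F ℂ, (if orderOf χ₂ = d₂ then
                χ₁ c⁻¹ * (χ₁ * χ₂) a * jacobiSum χ₁ χ₂ else 0) else 0) :=
  N_eq_jacobi_sum_general q F hcard a c ha hc e₁ e₂ he₁ he₂
end
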